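/- arXiv:2004.14809 — 3 statements merged into one kernel-verified Lean document; each statement's English description precedes it below -/
import Mathlib

section
/- Let H be a connected k-uniform hypergraph with at least one edge and signless Laplacian eigenpair (ρ, x), and let Z(H) = ∑_{v∈V} d(v)² be its Zagreb index. Then x_max ≥ ρ/(k·√(Z(H))), and equality holds if and only if H is regular. -/
open Finset Matrix

variable {V : Type*} [Fintype V] [DecidableEq V]

/-- The incidence matrix of a hypergraph with vertex type `V` and edge set `E`:
`B(v,e) = 1` if `v ∈ e` and `0` otherwise. -/
def inc (E : Finset (Finset V)) : Matrix V ↥E ℝ :=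
  fun v e => if v ∈ (e : Finset V) then 1 else 0

/-- The signless Laplacian matrix `Q = B * Bᵀ`. -/
def signlessLap (E : Finset (Finset V)) : Matrix V V ℝ :=
  inc E * (inc E)ᵀ

/-- The degree of a vertex: the number of edges containing it. -/
def deg (E : Finset (Finset V)) (v : V) : ℕ :=
  (E.filter fun e => v ∈ e).card

/-- A hypergraph is connected if the reflexive-transitive closure of the relation
"`u ≠ v` and some edge contains both `u` and `v`" relates every pair of vertices. -/
def HConnected (E : Finset (Finset V)) : Prop :=
  ∀ u v : V, Relation.ReflTransGen (fun a b => a ≠ b ∧ ∃ e ∈ E, a ∈ e ∧ b ∈ e) u v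

/-- A hypergraph is regular if all vertices have the same degree. -/
def HRegular (E : Finset (Finset V)) : Prop :=
  ∃ r, ∀ v : V, deg E v = r

/-- A signless Laplacian eigenpair `(ρ, x)`: `x` is entrywise positive,
normalized by `∑ v, x v ^ 2 = 1`, and `Q x = ρ x`. -/
def Eigenpair (E : Finset (Finset V)) (ρ : ℝ) (x : V → ℝ) : Prop :=
  (∀ v, 0 < x v) ∧ (∑ v, x v ^ 2 = 1) ∧ (signlessLap E).mulVec x = ρ • x

/-! With `S e = ∑ u ∈ e, x u`, the Rayleigh quotient gives `ρ = ∑ e, S e ^ 2`, and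
`S e ≤ k · xmax`, so `ρ ≤ k · xmax · ∑ e, S e = k · xmax · ∑ v, d(v) x v ≤ k · xmax · √Z`
by Cauchy–Schwarz. Equality forces `S e = k · xmax` on every edge; since every vertex lies on
an edge, `x` is constant, and then the eigenvalue equation `ρ x v = k d(v) x v` makes `d` constant.
Conversely, if `H` is `r`-regular, pairing `Q x = ρ x` with the all-ones vector gives `ρ = k r`;
at a vertex where `x` is maximal this forces `S e = k · xmax` on all incident edges, so by
connectivity the maximum spreads and `x` is constant, which makes the bound an equality. -/

lemma sum_sum_filter_mem_comm {M : Type*} [AddCommMonoid M] (E : Finset (Finset V))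
    (f : V → Finset V → M) :
    ∑ v, ∑ e ∈ E with v ∈ e, f v e = ∑ e ∈ E, ∑ v ∈ e, f v e :=
  Finset.sum_comm' fun v e => by simp [and_comm]

lemma sum_deg_mul (E : Finset (Finset V)) (f : V → ℝ) :
    ∑ v, (deg E v : ℝ) * f v = ∑ e ∈ E, ∑ v ∈ e, f v := by
  rw [← sum_sum_filter_mem_comm E fun v _ => f v]
  simp [deg]

lemma signlessLap_mulVec_apply (E : Finset (Finset V)) (x : V → ℝ) (v : V) :
    (signlessLap E *ᵥ x) v = ∑ e ∈ E with v ∈ e, ∑ u ∈ e, x u := by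
  rw [signlessLap, ← mulVec_mulVec, Finset.sum_filter]
  simp only [mulVec, dotProduct, inc, transpose_apply, ite_mul, one_mul, zero_mul,
    Finset.sum_ite_mem, Finset.univ_inter]
  exact Finset.sum_coe_sort E fun e => if v ∈ e then ∑ u ∈ e, x u else 0

lemma sum_mul_signlessLap_mulVec (E : Finset (Finset V)) (x y : V → ℝ) :
    ∑ v, y v * (signlessLap E *ᵥ x) v = ∑ e ∈ E, (∑ u ∈ e, y u) * ∑ u ∈ e, x u := by
  calc ∑ v, y v * (signlessLap E *ᵥ x) v
      = ∑ v, ∑ e ∈ E with v ∈ e, y v * ∑ u ∈ e, x u :=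
        Finset.sum_congr rfl fun v _ => by rw [signlessLap_mulVec_apply, Finset.mul_sum]
    _ = ∑ e ∈ E, (∑ u ∈ e, y u) * ∑ u ∈ e, x u := by
        simp only [sum_sum_filter_mem_comm, Finset.sum_mul]

lemma sq_sum_le_card_mul_mul_sum {ι : Type*} {s : Finset ι} {f : ι → ℝ} {M : ℝ}
    (hpos : ∀ i ∈ s, 0 ≤ f i) (hle : ∀ i ∈ s, f i ≤ M) :
    (∑ i ∈ s, f i) ^ 2 ≤ s.card * M * ∑ i ∈ s, f i := by
  rw [sq]
  refine mul_le_mul_of_nonneg_right ?_ (Finset.sum_nonneg hpos)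
  simpa using Finset.sum_le_card_nsmul s f M hle

lemma eq_of_sum_eq_card_mul {ι : Type*} {s : Finset ι} {f : ι → ℝ} {M : ℝ}
    (hle : ∀ i ∈ s, f i ≤ M) (hsum : ∑ i ∈ s, f i = s.card * M) : ∀ i ∈ s, f i = M :=
  (Finset.sum_eq_sum_iff_of_le hle).1 (by simpa using hsum)

theorem HConnected.forall_of_edge_closed {W : Type*} {E : Finset (Finset W)}
    (hconn : HConnected E) {P : W → Prop} {u : W} (hu : P u)
    (hP : ∀ e ∈ E, ∀ a ∈ e, P a → ∀ b ∈ e, P b) (v : W) :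
    P v := by
  induction hconn u v with
  | refl => exact hu
  | tail _ hstep ih =>
    obtain ⟨-, e, he, hb, hc⟩ := hstep
    exact hP e he _ hb ih _ hc

theorem HConnected.exists_mem_edge {W : Type*} {E : Finset (Finset W)} (hconn : HConnected E)
    {e₀ : Finset W} (he₀ : e₀ ∈ E) {u₀ : W} (hu₀ : u₀ ∈ e₀) (v : W) :
    ∃ e ∈ E, v ∈ e :=
  hconn.forall_of_edge_closed (P := fun v => ∃ e ∈ E, v ∈ e) ⟨e₀, he₀, hu₀⟩
    (fun e he _ _ _ _ hb => ⟨e, he, hb⟩) v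

section Eigenvector

variable {E : Finset (Finset V)} {k : ℕ} {ρ M : ℝ} {x : V → ℝ}

lemma mul_sum_mul_eq_sum_edge (heig : signlessLap E *ᵥ x = ρ • x) (y : V → ℝ) :
    ρ * ∑ v, y v * x v = ∑ e ∈ E, (∑ u ∈ e, y u) * ∑ u ∈ e, x u := by
  rw [← sum_mul_signlessLap_mulVec, heig, Finset.mul_sum]
  exact Finset.sum_congr rfl fun v _ => by simp only [Pi.smul_apply, smul_eq_mul]; ring

lemma rho_eq_sum_sq (heig : signlessLap E *ᵥ x = ρ • x) (hnorm : ∑ v, x v ^ 2 = 1) :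
    ρ = ∑ e ∈ E, (∑ u ∈ e, x u) ^ 2 := by
  simpa only [← sq, hnorm, mul_one] using mul_sum_mul_eq_sum_edge heig x

lemma sum_edge_le_sqrt_zagreb (E : Finset (Finset V)) (hnorm : ∑ v, x v ^ 2 = 1) :
    ∑ e ∈ E, ∑ u ∈ e, x u ≤ √(∑ v, (deg E v : ℝ) ^ 2) := by
  simpa [← sum_deg_mul, hnorm] using
    Real.sum_mul_le_sqrt_mul_sqrt univ (fun v => (deg E v : ℝ)) x

lemma rho_le_mul_sum_edge (hunif : ∀ e ∈ E, e.card = k) (heig : signlessLap E *ᵥ x = ρ • x)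
    (hnorm : ∑ v, x v ^ 2 = 1) (hpos : ∀ v, 0 ≤ x v) (hle : ∀ v, x v ≤ M) :
    ρ ≤ k * M * ∑ e ∈ E, ∑ u ∈ e, x u := by
  rw [rho_eq_sum_sq heig hnorm, Finset.mul_sum]
  exact Finset.sum_le_sum fun e he => hunif e he ▸
    sq_sum_le_card_mul_mul_sum (fun v _ => hpos v) (fun v _ => hle v)

lemma forall_mem_edge_eq_of_rho_eq (hk : 0 < k) (hunif : ∀ e ∈ E, e.card = k)
    (heig : signlessLap E *ᵥ x = ρ • x) (hnorm : ∑ v, x v ^ 2 = 1) (hpos : ∀ v, 0 < x v)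
    (hle : ∀ v, x v ≤ M) (hρ : ρ = k * M * ∑ e ∈ E, ∑ u ∈ e, x u) :
    ∀ e ∈ E, ∀ u ∈ e, x u = M := by
  rw [rho_eq_sum_sq heig hnorm, Finset.mul_sum] at hρ
  have hsq := (Finset.sum_eq_sum_iff_of_le fun e he =>
    hunif e he ▸ sq_sum_le_card_mul_mul_sum (fun v _ => (hpos v).le) (fun v _ => hle v)).1 hρ
  intro e he
  have hne : e.Nonempty := by rw [← Finset.card_pos, hunif e he]; exact hk
  have hsum_pos : 0 < ∑ u ∈ e, x u := Finset.sum_pos (fun u _ => hpos u) hne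
  refine eq_of_sum_eq_card_mul (fun u _ => hle u) ?_
  rw [hunif e he]
  exact mul_right_cancel₀ hsum_pos.ne' (by rw [← sq]; exact hsq e he)

lemma hRegular_of_mulVec_const (hk : k ≠ 0) (hunif : ∀ e ∈ E, e.card = k)
    (heig : signlessLap E *ᵥ x = ρ • x) {c : ℝ} (hc : c ≠ 0) (hx : ∀ v, x v = c) :
    HRegular E := by
  have hdeg : ∀ v, (k : ℝ) * deg E v = ρ := fun v => by
    have h := congrFun heig v
    rw [signlessLap_mulVec_apply, Pi.smul_apply, smul_eq_mul, hx,
      Finset.sum_congr rfl fun e he => by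
        rw [Finset.sum_congr rfl fun u _ => hx u, Finset.sum_const,
          hunif e (Finset.mem_filter.1 he).1, nsmul_eq_mul]] at h
    rw [Finset.sum_const, nsmul_eq_mul, ← deg] at h
    exact mul_right_cancel₀ hc (by linear_combination h)
  rcases isEmpty_or_nonempty V with hV | hV
  · exact ⟨0, isEmptyElim⟩
  · obtain ⟨v₀⟩ := hV
    refine ⟨deg E v₀, fun v => ?_⟩
    have hk' : (k : ℝ) ≠ 0 := Nat.cast_ne_zero.2 hk
    exact_mod_cast mul_left_cancel₀ hk' ((hdeg v).trans (hdeg v₀).symm)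

lemma rho_eq_of_regular [Nonempty V] (hunif : ∀ e ∈ E, e.card = k)
    (heig : signlessLap E *ᵥ x = ρ • x) (hpos : ∀ v, 0 < x v) {r : ℕ}
    (hr : ∀ v, deg E v = r) : ρ = k * r := by
  have hsum_pos : 0 < ∑ v, x v := Finset.sum_pos (fun v _ => hpos v) Finset.univ_nonempty
  refine mul_right_cancel₀ hsum_pos.ne' ?_
  calc ρ * ∑ v, x v = ∑ e ∈ E, (∑ u ∈ e, (1 : ℝ)) * ∑ u ∈ e, x u := by
        simpa using mul_sum_mul_eq_sum_edge heig 1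
    _ = k * ∑ v, (deg E v : ℝ) * x v := by
        rw [sum_deg_mul, Finset.mul_sum]
        exact Finset.sum_congr rfl fun e he => by simp [hunif e he]
    _ = k * r * ∑ v, x v := by simp [hr, Finset.mul_sum, mul_assoc]

lemma forall_mem_edge_eq_of_regular (hunif : ∀ e ∈ E, e.card = k)
    (heig : signlessLap E *ᵥ x = ρ • x) {r : ℕ} (hr : ∀ v, deg E v = r) (hρ : ρ = k * r)
    (hle : ∀ v, x v ≤ M) {e : Finset V} (he : e ∈ E) {v : V} (hv : v ∈ e) (hxv : x v = M) :
    ∀ w ∈ e, x w = M := by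
  have hbound : ∀ e' ∈ E.filter (v ∈ ·), ∑ u ∈ e', x u ≤ k * M := fun e' he' => by
    simpa [hunif e' (Finset.mem_filter.1 he').1] using
      Finset.sum_le_card_nsmul e' x M fun u _ => hle u
  have hsum :
      ∑ e' ∈ E with v ∈ e', ∑ u ∈ e', x u = ∑ e' ∈ E with v ∈ e', (k : ℝ) * M := by
    rw [← signlessLap_mulVec_apply, heig, Pi.smul_apply, smul_eq_mul, hxv, hρ,
      Finset.sum_const, ← deg, hr v, nsmul_eq_mul]
    ring
  have hedge := (Finset.sum_eq_sum_iff_of_le hbound).1 hsum e (Finset.mem_filter.2 ⟨he, hv⟩)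
  exact eq_of_sum_eq_card_mul (fun u _ => hle u) (by rw [hunif e he]; exact hedge)

lemma sqrt_zagreb_mul_eq_of_regular {r : ℕ} (hr : ∀ v, deg E v = r) {c : ℝ} (hc : 0 ≤ c)
    (hx : ∀ v, x v = c) (hnorm : ∑ v, x v ^ 2 = 1) :
    √(∑ v, (deg E v : ℝ) ^ 2) * c = r := by
  have hZ : (∑ v, (deg E v : ℝ) ^ 2) * c ^ 2 = (r : ℝ) ^ 2 := by
    calc (∑ v, (deg E v : ℝ) ^ 2) * c ^ 2 = (r : ℝ) ^ 2 * ∑ v, x v ^ 2 := by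
          simp [hr, hx]
          ring
      _ = (r : ℝ) ^ 2 := by rw [hnorm, mul_one]
  rw [← Real.sqrt_sq hc, ← Real.sqrt_mul (Finset.sum_nonneg fun v _ => sq_nonneg _), hZ,
    Real.sqrt_sq (Nat.cast_nonneg r)]

end Eigenvector

/-- For a connected `k`-graph with at least one edge, signless Laplacian eigenpair
`(ρ, x)` and Zagreb index `Z = ∑ v, d(v)^2`:
`x_max ≥ ρ / (k * √Z)`, with equality iff `H` is regular. -/
theorem xmax_ge_rho_div_k_sqrt_zagreb {V : Type*} [Fintype V] [DecidableEq V] (k : ℕ)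
    (hk : 2 ≤ k) (E : Finset (Finset V)) (hunif : ∀ e ∈ E, e.card = k)
    (hconn : HConnected E) (hE : E.Nonempty)
    (ρ : ℝ) (x : V → ℝ) (hx : Eigenpair E ρ x)
    (xmax : ℝ) (hmax : IsGreatest (Set.range x) xmax) :
    ρ / (k * Real.sqrt (∑ v, (deg E v : ℝ) ^ 2)) ≤ xmax ∧
      (xmax = ρ / (k * Real.sqrt (∑ v, (deg E v : ℝ) ^ 2)) ↔ HRegular E) := by
  obtain ⟨hpos, hnorm, heig⟩ := hx
  obtain ⟨⟨v₀, hv₀⟩, hub⟩ := hmax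
  have hle : ∀ v, x v ≤ xmax := fun v => hub ⟨v, rfl⟩
  have hxmax : 0 < xmax := hv₀ ▸ hpos v₀
  obtain ⟨e₀, he₀⟩ := hE
  obtain ⟨u₀, hu₀⟩ : e₀.Nonempty := by rw [← Finset.card_pos, hunif e₀ he₀]; omega
  have hdeg : 0 < deg E u₀ := Finset.card_pos.2 ⟨e₀, Finset.mem_filter.2 ⟨he₀, hu₀⟩⟩
  have hkZ : 0 < (k : ℝ) * √(∑ v, (deg E v : ℝ) ^ 2) := by
    refine mul_pos (by positivity) (Real.sqrt_pos.2 ?_)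
    exact Finset.sum_pos' (fun _ _ => by positivity) ⟨u₀, Finset.mem_univ _, by positivity⟩
  have hbound := rho_le_mul_sum_edge hunif heig hnorm (fun v => (hpos v).le) hle
  have hcs : k * xmax * ∑ e ∈ E, ∑ u ∈ e, x u ≤ xmax * (k * √(∑ v, (deg E v : ℝ) ^ 2)) := by
    rw [mul_left_comm, ← mul_assoc]
    exact mul_le_mul_of_nonneg_left (sum_edge_le_sqrt_zagreb E hnorm) (by positivity)
  rw [div_le_iff₀ hkZ, eq_div_iff hkZ.ne']
  refine ⟨hbound.trans hcs, fun heq => ?_, fun ⟨r, hr⟩ => ?_⟩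
  · have hedge := forall_mem_edge_eq_of_rho_eq (by omega) hunif heig hnorm hpos hle (by linarith)
    refine hRegular_of_mulVec_const (by omega) hunif heig hxmax.ne' fun v => ?_
    obtain ⟨e, he, hv⟩ := hconn.exists_mem_edge he₀ hu₀ v
    exact hedge e he v hv
  · have : Nonempty V := ⟨v₀⟩
    have hρ := rho_eq_of_regular hunif heig hpos hr
    have hconst : ∀ v, x v = xmax := hconn.forall_of_edge_closed hv₀
      fun e he a ha hxa => forall_mem_edge_eq_of_regular hunif heig hr hρ hle he ha hxa
    rw [hρ, ← sqrt_zagreb_mul_eq_of_regular hr hxmax.le hconst hnorm]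
    ring
end

section
/- Let H be a connected k-uniform hypergraph with n vertices, m edges, maximum degree Δ, and signless Laplacian eigenpair (ρ, x). Then (knΔ − k²m)·x_min ≤ (kΔ − ρ)·√n, and equality holds if and only if H is regular. -/
open Finset Matrix

variable {V : Type*} [Fintype V] [DecidableEq V]

/-! Pairing the eigen-equation `Q x = ρ x` with the all-ones vector, whose image under the
symmetric matrix `Q = B Bᵀ` is `k · deg`, gives `∑ᵥ (kΔ - k d(v)) xᵥ = (kΔ - ρ) ∑ᵥ xᵥ`. The
weights `kΔ - k d(v)` are nonnegative and sum to `knΔ - k²m`, so the left side is at least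
`(knΔ - k²m) x_min`, while `∑ᵥ xᵥ ≤ √n` by Cauchy–Schwarz. In the equality case either `ρ = kΔ`,
and every weight vanishes, or `∑ᵥ xᵥ = √n`, and `x` is constant; either way `k d(v) = ρ` for
every vertex. -/

section Incidence

variable {k : ℕ} {E : Finset (Finset V)}

omit [Fintype V] in
lemma inc_mulVec_one (E : Finset (Finset V)) : inc E *ᵥ 1 = fun v => (deg E v : ℝ) := by
  ext v
  simp only [mulVec, dotProduct, inc, Pi.one_apply, mul_one, deg]
  rw [Finset.sum_coe_sort E (fun e => if v ∈ e then (1 : ℝ) else 0), Finset.sum_boole]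

lemma one_vecMul_inc (hunif : ∀ e ∈ E, e.card = k) : 1 ᵥ* inc E = fun _ => (k : ℝ) := by
  ext e
  simp [vecMul, dotProduct, inc, hunif e e.2]

lemma sum_deg (hunif : ∀ e ∈ E, e.card = k) : ∑ v, (deg E v : ℝ) = k * #E := by
  have h := dotProduct_mulVec 1 (inc E) 1
  rw [inc_mulVec_one, one_vecMul_inc hunif, one_dotProduct, dotProduct_one] at h
  simpa [mul_comm] using h

omit [Fintype V] in
lemma signlessLap_transpose (E : Finset (Finset V)) : (signlessLap E)ᵀ = signlessLap E := by
  simp [signlessLap, transpose_mul]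

lemma signlessLap_mulVec_one (hunif : ∀ e ∈ E, e.card = k) :
    signlessLap E *ᵥ 1 = fun v => k * (deg E v : ℝ) := by
  have hconst : (fun _ : E => (k : ℝ)) = (k : ℝ) • 1 := by ext; simp
  rw [← signlessLap_transpose, mulVec_transpose, signlessLap, ← vecMul_vecMul,
    one_vecMul_inc hunif, vecMul_transpose, hconst, mulVec_smul, inc_mulVec_one]
  rfl

lemma sum_mul_deg_mul_eq (hunif : ∀ e ∈ E, e.card = k) {ρ : ℝ} {x : V → ℝ}
    (h : signlessLap E *ᵥ x = ρ • x) : ∑ v, k * (deg E v : ℝ) * x v = ρ * ∑ v, x v :=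
  calc ∑ v, k * (deg E v : ℝ) * x v = (signlessLap E *ᵥ 1) ⬝ᵥ x := by
        rw [signlessLap_mulVec_one hunif]; rfl
    _ = 1 ⬝ᵥ (signlessLap E *ᵥ x) := by
        rw [dotProduct_mulVec, ← mulVec_transpose, signlessLap_transpose]
    _ = ρ * ∑ v, x v := by rw [h, dotProduct_smul, one_dotProduct, smul_eq_mul]

end Incidence

lemma sum_le_sqrt_card_of_sum_sq_eq_one {ι : Type*} [Fintype ι] {x : ι → ℝ}
    (h : ∑ i, x i ^ 2 = 1) : ∑ i, x i ≤ √(Fintype.card ι) :=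
  Real.le_sqrt_of_sq_le (by simpa [h] using sq_sum_le_card_mul_sum_sq (s := univ) (f := x))

lemma eq_inv_sqrt_card_of_sum_eq_sqrt_card {ι : Type*} [Fintype ι] {x : ι → ℝ}
    (h2 : ∑ i, x i ^ 2 = 1) (h1 : ∑ i, x i = √(Fintype.card ι)) (i : ι) :
    x i = (√(Fintype.card ι))⁻¹ := by
  set c := (√(Fintype.card ι))⁻¹
  have hn : (0 : ℝ) < Fintype.card ι := by
    have : Nonempty ι := univ_nonempty_iff.1 (nonempty_of_sum_ne_zero (h2 ▸ one_ne_zero))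
    exact_mod_cast Fintype.card_pos
  have hsqrt : 0 < √(Fintype.card ι : ℝ) := Real.sqrt_pos.2 hn
  have hc1 : c * ∑ i, x i = 1 := by rw [h1]; exact inv_mul_cancel₀ hsqrt.ne'
  have hc2 : (Fintype.card ι : ℝ) * c ^ 2 = 1 := by
    rw [inv_pow, Real.sq_sqrt hn.le]; exact mul_inv_cancel₀ hn.ne'
  have hvar : ∑ j, (x j - c) ^ 2 = 0 := by
    calc ∑ j, (x j - c) ^ 2 = ∑ j, x j ^ 2 - 2 * (c * ∑ j, x j) + Fintype.card ι * c ^ 2 := by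
          simp only [sub_sq, sum_add_distrib, sum_sub_distrib, ← sum_mul, ← mul_sum, sum_const,
            card_univ, nsmul_eq_mul]
          ring
      _ = 0 := by rw [h2, hc1, hc2]; ring
  have := (sum_eq_zero_iff_of_nonneg fun j _ => sq_nonneg (x j - c)).1 hvar i (mem_univ i)
  linarith [pow_eq_zero_iff (n := 2) two_ne_zero |>.1 this]

omit [Fintype V] in
lemma sub_mul_deg_nonneg {k Δ : ℕ} {E : Finset (Finset V)} (hΔ : ∀ v, deg E v ≤ Δ) (v : V) :
    0 ≤ (k : ℝ) * Δ - k * deg E v :=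
  sub_nonneg.2 (mul_le_mul_of_nonneg_left (by exact_mod_cast hΔ v) k.cast_nonneg)

omit [Fintype V] in
lemma hRegular_of_mul_deg_eq {k : ℕ} {E : Finset (Finset V)} (hk : k ≠ 0) (c : ℝ)
    (h : ∀ v, (k : ℝ) * deg E v = c) : HRegular E := by
  rcases isEmpty_or_nonempty V with hV | ⟨⟨v₀⟩⟩
  · exact ⟨0, isEmptyElim⟩
  · refine ⟨deg E v₀, fun v => ?_⟩
    exact_mod_cast mul_left_cancel₀ (Nat.cast_ne_zero.2 hk) ((h v).trans (h v₀).symm)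

section Weighted

variable {k : ℕ} {E : Finset (Finset V)} {ρ : ℝ} {x : V → ℝ}

lemma sum_sub_mul_deg (hunif : ∀ e ∈ E, e.card = k) (c : ℝ) :
    ∑ v, (c - k * (deg E v : ℝ)) = Fintype.card V * c - k ^ 2 * #E := by
  rw [sum_sub_distrib, ← mul_sum, sum_deg hunif, sum_const, card_univ, nsmul_eq_mul]
  ring

lemma sum_sub_mul_deg_mul_eq (hunif : ∀ e ∈ E, e.card = k) (h : signlessLap E *ᵥ x = ρ • x)
    (c : ℝ) : ∑ v, (c - k * (deg E v : ℝ)) * x v = (c - ρ) * ∑ v, x v := by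
  simp only [sub_mul, sum_sub_distrib, ← mul_sum, sum_mul_deg_mul_eq hunif h]

lemma card_mul_eq_of_deg_eq (hunif : ∀ e ∈ E, e.card = k) {r : ℕ} (hr : ∀ v, deg E v = r) :
    (Fintype.card V : ℝ) * r = k * #E := by
  rw [← sum_deg hunif]
  simp [hr]

end Weighted

namespace Eigenpair

variable {k Δ : ℕ} {E : Finset (Finset V)} {ρ : ℝ} {x : V → ℝ}

lemma sum_pos (hx : Eigenpair E ρ x) : 0 < ∑ v, x v :=
  Finset.sum_pos (fun v _ => hx.1 v) (nonempty_of_sum_ne_zero (hx.2.1 ▸ one_ne_zero))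

lemma eigenvalue_le (hunif : ∀ e ∈ E, e.card = k) (hx : Eigenpair E ρ x)
    (hΔ : ∀ v, deg E v ≤ Δ) : ρ ≤ k * Δ := by
  have h : 0 ≤ ((k : ℝ) * Δ - ρ) * ∑ v, x v := by
    rw [← sum_sub_mul_deg_mul_eq hunif hx.2.2]
    exact sum_nonneg fun v _ => mul_nonneg (sub_mul_deg_nonneg hΔ v) (hx.1 v).le
  exact sub_nonneg.1 (nonneg_of_mul_nonneg_left h hx.sum_pos)

lemma mul_le_sub_mul_sum (hunif : ∀ e ∈ E, e.card = k) (hx : Eigenpair E ρ x)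
    (hΔ : ∀ v, deg E v ≤ Δ) {xmin : ℝ} (hmin : ∀ v, xmin ≤ x v) :
    ((k : ℝ) * Fintype.card V * Δ - (k : ℝ) ^ 2 * #E) * xmin ≤ (k * Δ - ρ) * ∑ v, x v :=
  calc _ = ∑ v, ((k : ℝ) * Δ - k * deg E v) * xmin := by
        rw [← sum_mul, sum_sub_mul_deg hunif]; ring
    _ ≤ ∑ v, ((k : ℝ) * Δ - k * deg E v) * x v :=
        sum_le_sum fun v _ => mul_le_mul_of_nonneg_left (hmin v) (sub_mul_deg_nonneg hΔ v)
    _ = _ := sum_sub_mul_deg_mul_eq hunif hx.2.2 _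

lemma mul_deg_eq_of_eigenvalue_eq (hunif : ∀ e ∈ E, e.card = k) (hx : Eigenpair E ρ x)
    (hΔ : ∀ v, deg E v ≤ Δ) (hρ : ρ = k * Δ) (v : V) : k * (deg E v : ℝ) = ρ := by
  have h0 : ∑ u, ((k : ℝ) * Δ - k * deg E u) * x u = 0 := by
    rw [sum_sub_mul_deg_mul_eq hunif hx.2.2, hρ, sub_self, zero_mul]
  have hv := (sum_eq_zero_iff_of_nonneg fun u _ =>
    mul_nonneg (sub_mul_deg_nonneg hΔ u) (hx.1 u).le).1 h0 v (mem_univ v)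
  rw [mul_eq_zero, or_iff_left (hx.1 v).ne'] at hv
  linarith

lemma mul_deg_eq_of_sum_eq_sqrt_card (hunif : ∀ e ∈ E, e.card = k) (hx : Eigenpair E ρ x)
    (hS : ∑ v, x v = √(Fintype.card V)) (v : V) : k * (deg E v : ℝ) = ρ := by
  have hconst := eq_inv_sqrt_card_of_sum_eq_sqrt_card hx.2.1 hS
  have hv := congrFun hx.2.2 v
  rw [show x = (√(Fintype.card V))⁻¹ • 1 by ext u; simp [hconst u], mulVec_smul,
    signlessLap_mulVec_one hunif] at hv
  have hc : (√(Fintype.card V : ℝ))⁻¹ ≠ 0 := hconst v ▸ (hx.1 v).ne'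
  simpa [hc, mul_comm] using hv

lemma eigenvalue_eq_of_deg_eq (hunif : ∀ e ∈ E, e.card = k) (hx : Eigenpair E ρ x) {r : ℕ}
    (hr : ∀ v, deg E v = r) : ρ = k * r := by
  have h := sum_mul_deg_mul_eq hunif hx.2.2
  simp only [hr, ← mul_sum] at h
  exact (mul_right_cancel₀ hx.sum_pos.ne' h).symm

end Eigenpair

theorem xmin_maxdeg_bound_general {V : Type*} [Fintype V] [DecidableEq V] (k : ℕ)
    (hk : 2 ≤ k) (E : Finset (Finset V)) (hunif : ∀ e ∈ E, e.card = k)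
    (ρ : ℝ) (x : V → ℝ) (hx : Eigenpair E ρ x)
    (Δ : ℕ) (hΔ : IsGreatest (Set.range (deg E)) Δ)
    (xmin : ℝ) (hmin : IsLeast (Set.range x) xmin) :
    ((k : ℝ) * (Fintype.card V) * Δ - (k : ℝ) ^ 2 * E.card) * xmin ≤
        ((k : ℝ) * Δ - ρ) * Real.sqrt (Fintype.card V) ∧
      (((k : ℝ) * (Fintype.card V) * Δ - (k : ℝ) ^ 2 * E.card) * xmin =
          ((k : ℝ) * Δ - ρ) * Real.sqrt (Fintype.card V) ↔ HRegular E) := by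
  have hdeg : ∀ v, deg E v ≤ Δ := fun v => hΔ.2 ⟨v, rfl⟩
  have hkey := hx.mul_le_sub_mul_sum hunif hdeg fun v => hmin.2 ⟨v, rfl⟩
  have hρ := hx.eigenvalue_le hunif hdeg
  have hS := sum_le_sqrt_card_of_sum_sq_eq_one hx.2.1
  refine ⟨hkey.trans (mul_le_mul_of_nonneg_left hS (sub_nonneg.2 hρ)), fun heq => ?_, ?_⟩
  · refine hRegular_of_mul_deg_eq (by omega : k ≠ 0) ρ fun v => ?_
    rcases hρ.eq_or_lt with hρ | hρ
    · exact hx.mul_deg_eq_of_eigenvalue_eq hunif hdeg hρ v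
    · refine hx.mul_deg_eq_of_sum_eq_sqrt_card hunif (le_antisymm hS ?_) v
      exact le_of_mul_le_mul_left (heq.symm.trans_le hkey) (sub_pos.2 hρ)
  · rintro ⟨r, hr⟩
    obtain rfl : Δ = r := by
      obtain ⟨v, hv⟩ := hΔ.1
      rw [← hv, hr v]
    rw [hx.eigenvalue_eq_of_deg_eq hunif hr, sq, mul_assoc (k : ℝ) k,
      ← card_mul_eq_of_deg_eq hunif hr]
    ring

/-- For a connected `k`-graph with `n` vertices, `m` edges, maximum degree `Δ`
and signless Laplacian eigenpair `(ρ, x)`: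
`(knΔ − k²m) x_min ≤ (kΔ − ρ) √n`, with equality iff `H` is regular. -/
theorem xmin_maxdeg_bound {V : Type*} [Fintype V] [DecidableEq V] (k : ℕ)
    (hk : 2 ≤ k) (E : Finset (Finset V)) (hunif : ∀ e ∈ E, e.card = k)
    (hconn : HConnected E)
    (ρ : ℝ) (x : V → ℝ) (hx : Eigenpair E ρ x)
    (Δ : ℕ) (hΔ : IsGreatest (Set.range (deg E)) Δ)
    (xmin : ℝ) (hmin : IsLeast (Set.range x) xmin) :
    ((k : ℝ) * (Fintype.card V) * Δ - (k : ℝ) ^ 2 * E.card) * xmin ≤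
        ((k : ℝ) * Δ - ρ) * Real.sqrt (Fintype.card V) ∧
      (((k : ℝ) * (Fintype.card V) * Δ - (k : ℝ) ^ 2 * E.card) * xmin =
          ((k : ℝ) * Δ - ρ) * Real.sqrt (Fintype.card V) ↔ HRegular E) :=
  xmin_maxdeg_bound_general k hk E hunif ρ x hx Δ hΔ xmin hmin
end

section
/- Let H be a connected k-uniform hypergraph with at least one edge and signless Laplacian eigenpair (ρ, x). Then min_{e∈E} ∑_{v∈e} d(v) ≤ ρ ≤ max_{e∈E} ∑_{v∈e} d(v). Moreover, equality holds in either inequality if and only if H is edge-regular, i.e. the sum ∑_{v∈e} d(v) is the same for every edge e ∈ E. -/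
/-!
Write `B` for the incidence matrix. Since `ρ x = B Bᵀ x`, the vector `y = Bᵀ x`, with
`y e = ∑ v ∈ e, x v > 0`, satisfies `BᵀB y = ρ y`. The edge matrix `BᵀB` is nonnegative, its
`(e, f)` entry is `|e ∩ f|`, so its row sums are the edge degree sums `∑ v ∈ e, d(v)`, and it is
irreducible because `H` is connected. Evaluating `ρ y e = ∑ f, |e ∩ f| y f` at an edge where `y`
is maximal (minimal) bounds `ρ` by that edge's degree sum from above (below). If `ρ` equals the
largest degree sum, the same computation forces `y` to be maximal on every edge meeting a
maximal one, so `y` is constant by connectivity and every row sum equals `ρ`; likewise for the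
smallest.
-/

open Finset Matrix

variable {V : Type*} [Fintype V] [DecidableEq V]

namespace Matrix

variable {ι : Type*} [Fintype ι] {C : Matrix ι ι ℝ} {y : ι → ℝ} {ρ : ℝ}

theorem mulVec_apply_le_rowSum_mul (hC : ∀ i j, 0 ≤ C i j) {i : ι} (hmax : ∀ j, y j ≤ y i) :
    (C *ᵥ y) i ≤ (∑ j, C i j) * y i := by
  rw [mulVec, dotProduct, Finset.sum_mul]
  exact Finset.sum_le_sum fun j _ => mul_le_mul_of_nonneg_left (hmax j) (hC i j)

theorem eq_of_rowSum_mul_le_mulVec_apply (hC : ∀ i j, 0 ≤ C i j) {i j : ι}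
    (hmax : ∀ l, y l ≤ y i) (h : (∑ l, C i l) * y i ≤ (C *ᵥ y) i) (hij : C i j ≠ 0) :
    y j = y i := by
  have hterm : ∀ l ∈ Finset.univ, 0 ≤ C i l * (y i - y l) :=
    fun l _ => mul_nonneg (hC i l) (sub_nonneg.2 (hmax l))
  have hsum : ∑ l, C i l * (y i - y l) = (∑ l, C i l) * y i - (C *ᵥ y) i := by
    simp only [mul_sub, Finset.sum_sub_distrib, Finset.sum_mul, mulVec, dotProduct]
  have hzero : ∑ l, C i l * (y i - y l) = 0 :=
    le_antisymm (by linarith) (Finset.sum_nonneg hterm)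
  have hj := (Finset.sum_eq_zero_iff_of_nonneg hterm).1 hzero j (Finset.mem_univ j)
  linarith [(mul_eq_zero.1 hj).resolve_left hij]

theorem eq_of_reflTransGen_ne_zero (hC : ∀ i j, 0 ≤ C i j) {i : ι} (hmax : ∀ j, y j ≤ y i)
    (hrow : ∀ j, y j = y i → (∑ l, C j l) * y j ≤ (C *ᵥ y) j) {j : ι}
    (hij : Relation.ReflTransGen (fun a b => C a b ≠ 0) i j) : y j = y i := by
  induction hij with
  | refl => rfl
  | tail _ hbc ih =>
    exact (eq_of_rowSum_mul_le_mulVec_apply hC (ih ▸ hmax) (hrow _ ih) hbc).trans ih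

theorem rowSum_eq_of_mulVec_eq_smul_of_forall_eq (hρ : C *ᵥ y = ρ • y) {c : ℝ} (hc : c ≠ 0)
    (hconst : ∀ j, y j = c) (i : ι) : ∑ j, C i j = ρ := by
  have hi := congrFun hρ i
  simp only [mulVec, dotProduct, hconst, ← Finset.sum_mul, Pi.smul_apply, smul_eq_mul] at hi
  exact mul_right_cancel₀ hc hi

section PositiveEigenvector

variable (hC : ∀ i j, 0 ≤ C i j) (hy : ∀ i, 0 < y i) (hρ : C *ᵥ y = ρ • y)
include hC hy hρ

theorem eigenvalue_le_of_rowSum_le [Nonempty ι] {r : ℝ} (hr : ∀ i, ∑ j, C i j ≤ r) : ρ ≤ r := by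
  obtain ⟨i, hi⟩ := Finite.exists_max y
  have h := mulVec_apply_le_rowSum_mul hC hi
  rw [hρ, Pi.smul_apply, smul_eq_mul] at h
  exact (le_of_mul_le_mul_right h (hy i)).trans (hr i)

theorem le_eigenvalue_of_le_rowSum [Nonempty ι] {r : ℝ} (hr : ∀ i, r ≤ ∑ j, C i j) : r ≤ ρ := by
  obtain ⟨i, hi⟩ := Finite.exists_min y
  have h := mulVec_apply_le_rowSum_mul hC (y := -y) fun j => neg_le_neg (hi j)
  rw [mulVec_neg, hρ, Pi.neg_apply, Pi.smul_apply, smul_eq_mul, Pi.neg_apply, mul_neg,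
    neg_le_neg_iff] at h
  exact (hr i).trans (le_of_mul_le_mul_right h (hy i))

variable (hirr : ∀ i j, Relation.ReflTransGen (fun a b => C a b ≠ 0) i j)
include hirr

theorem rowSum_eq_of_rowSum_le_eigenvalue (hr : ∀ i, ∑ j, C i j ≤ ρ) (i : ι) :
    ∑ j, C i j = ρ := by
  have : Nonempty ι := ⟨i⟩
  obtain ⟨m, hm⟩ := Finite.exists_max y
  have hrow : ∀ j, y j = y m → (∑ l, C j l) * y j ≤ (C *ᵥ y) j := fun j _ => by
    rw [hρ, Pi.smul_apply, smul_eq_mul]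
    exact mul_le_mul_of_nonneg_right (hr j) (hy j).le
  exact rowSum_eq_of_mulVec_eq_smul_of_forall_eq hρ (hy m).ne'
    (fun j => eq_of_reflTransGen_ne_zero hC hm hrow (hirr m j)) i

theorem rowSum_eq_of_eigenvalue_le_rowSum (hr : ∀ i, ρ ≤ ∑ j, C i j) (i : ι) :
    ∑ j, C i j = ρ := by
  have : Nonempty ι := ⟨i⟩
  obtain ⟨m, hm⟩ := Finite.exists_min y
  have hρ' : C *ᵥ (-y) = ρ • (-y) := by rw [mulVec_neg, hρ, smul_neg]
  have hrow : ∀ j, (-y) j = (-y) m → (∑ l, C j l) * (-y) j ≤ (C *ᵥ -y) j := fun j _ => by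
    rw [hρ', Pi.smul_apply, smul_eq_mul, Pi.neg_apply, mul_neg, mul_neg, neg_le_neg_iff]
    exact mul_le_mul_of_nonneg_right (hr j) (hy j).le
  exact rowSum_eq_of_mulVec_eq_smul_of_forall_eq hρ' (neg_ne_zero.2 (hy m).ne')
    (fun j => eq_of_reflTransGen_ne_zero hC (fun j => neg_le_neg (hm j)) hrow (hirr m j)) i

end PositiveEigenvector

theorem mul_mulVec_mulVec_eq_smul {m n : Type*} [Fintype m] [Fintype n] {A : Matrix m n ℝ}
    {B : Matrix n m ℝ} {x : m → ℝ} (h : (A * B) *ᵥ x = ρ • x) :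
    (B * A) *ᵥ (B *ᵥ x) = ρ • (B *ᵥ x) := by
  rw [mulVec_mulVec, Matrix.mul_assoc, ← mulVec_mulVec, h, mulVec_smul]

end Matrix

theorem transpose_inc_mul_inc_apply (E : Finset (Finset V)) (e f : E) :
    ((inc E)ᵀ * inc E) e f = #((e : Finset V) ∩ f) := by
  simp only [mul_apply, transpose_apply, inc, ite_mul, one_mul, zero_mul, ← ite_and]
  rw [sum_boole]
  congr 2
  ext v
  simp

omit [Fintype V] in
theorem sum_inc_apply (E : Finset (Finset V)) (v : V) : ∑ e : E, inc E v e = deg E v := by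
  simp only [inc]
  rw [sum_coe_sort E fun e => if v ∈ e then (1 : ℝ) else 0, sum_boole, deg]

theorem sum_transpose_inc_mul_inc_apply (E : Finset (Finset V)) (e : E) :
    ∑ f, ((inc E)ᵀ * inc E) e f = ∑ v ∈ (e : Finset V), (deg E v : ℝ) := by
  simp only [mul_apply, transpose_apply]
  rw [sum_comm]
  simp only [← mul_sum, sum_inc_apply]
  simp only [inc, ite_mul, one_mul, zero_mul, sum_ite_mem, univ_inter]

theorem transpose_inc_mulVec_apply (E : Finset (Finset V)) (x : V → ℝ) (e : E) :
    ((inc E)ᵀ *ᵥ x) e = ∑ v ∈ (e : Finset V), x v := by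
  simp [mulVec, dotProduct, inc, ite_mul, sum_ite_mem]

omit [Fintype V] in
theorem HConnected.reflTransGen_inter_nonempty {E : Finset (Finset V)} (hconn : HConnected E)
    (hne : ∀ e ∈ E, e.Nonempty) (e f : E) :
    Relation.ReflTransGen (fun a b : E => ((a : Finset V) ∩ b).Nonempty) e f := by
  obtain ⟨v, hv⟩ := hne e e.2
  obtain ⟨w, hw⟩ := hne f f.2
  suffices h : ∀ u, Relation.ReflTransGen (fun a b => a ≠ b ∧ ∃ e ∈ E, a ∈ e ∧ b ∈ e) v u →
      ∀ g : E, u ∈ (g : Finset V) → Relation.ReflTransGen _ e g from h w (hconn v w) f hw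
  intro u hu
  induction hu with
  | refl => exact fun g hg => .single ⟨v, mem_inter.2 ⟨hv, hg⟩⟩
  | tail _ hab ih =>
    obtain ⟨-, h, hE, ha, hb⟩ := hab
    exact fun g hg => (ih ⟨h, hE⟩ ha).tail ⟨_, mem_inter.2 ⟨hb, hg⟩⟩

theorem HConnected.reflTransGen_transpose_inc_mul_inc_ne_zero {E : Finset (Finset V)}
    (hconn : HConnected E) (hne : ∀ e ∈ E, e.Nonempty) (e f : E) :
    Relation.ReflTransGen (fun a b => ((inc E)ᵀ * inc E) a b ≠ 0) e f :=
  Relation.ReflTransGen.mono (fun a b hab => by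
    rw [transpose_inc_mul_inc_apply]; exact_mod_cast hab.card_pos.ne') _ _
    (hconn.reflTransGen_inter_nonempty hne e f)

theorem transpose_inc_mulVec_pos {E : Finset (Finset V)} (hne : ∀ e ∈ E, e.Nonempty) {x : V → ℝ}
    (hx : ∀ v, 0 < x v) (e : E) : 0 < ((inc E)ᵀ *ᵥ x) e := by
  rw [transpose_inc_mulVec_apply]
  exact sum_pos (fun v _ => hx v) (hne e e.2)

omit [Fintype V] in
theorem exists_sum_deg_eq_of_forall_eq {E : Finset (Finset V)} (hE : E.Nonempty) {r : ℝ}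
    (h : ∀ e ∈ E, ∑ v ∈ e, (deg E v : ℝ) = r) : ∃ c : ℕ, ∀ e ∈ E, ∑ v ∈ e, deg E v = c := by
  obtain ⟨e₀, he₀⟩ := hE
  exact ⟨∑ v ∈ e₀, deg E v, fun e he => by exact_mod_cast (h e he).trans (h e₀ he₀).symm⟩

/-- For a connected `k`-graph with at least one edge and signless Laplacian eigenpair
`(ρ, x)`: `min_{e∈E} ∑_{v∈e} d(v) ≤ ρ ≤ max_{e∈E} ∑_{v∈e} d(v)`, and equality holds
in either inequality iff the sum `∑_{v∈e} d(v)` is the same for every edge. -/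
theorem rho_between_edge_degree_sums {V : Type*} [Fintype V] [DecidableEq V] (k : ℕ)
    (hk : 2 ≤ k) (E : Finset (Finset V)) (hunif : ∀ e ∈ E, e.card = k)
    (hconn : HConnected E) (hE : E.Nonempty)
    (ρ : ℝ) (x : V → ℝ) (hx : Eigenpair E ρ x) :
    ((E.inf' hE fun e => ∑ v ∈ e, (deg E v : ℝ)) ≤ ρ ∧
        ρ ≤ E.sup' hE fun e => ∑ v ∈ e, (deg E v : ℝ)) ∧
      ((E.inf' hE fun e => ∑ v ∈ e, (deg E v : ℝ)) = ρ ↔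
        ∃ c : ℕ, ∀ e ∈ E, ∑ v ∈ e, deg E v = c) ∧
      (ρ = (E.sup' hE fun e => ∑ v ∈ e, (deg E v : ℝ)) ↔
        ∃ c : ℕ, ∀ e ∈ E, ∑ v ∈ e, deg E v = c) := by
  obtain ⟨hxpos, -, hQ⟩ := hx
  have : Nonempty E := hE.to_subtype
  have hne : ∀ e ∈ E, e.Nonempty := fun e he => card_pos.1 (hunif e he ▸ by omega)
  have hC (e f : E) : 0 ≤ ((inc E)ᵀ * inc E) e f := by
    rw [transpose_inc_mul_inc_apply]; positivity
  have hirr := hconn.reflTransGen_transpose_inc_mul_inc_ne_zero hne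
  have hy := transpose_inc_mulVec_pos hne hxpos
  have hρ := mul_mulVec_mulVec_eq_smul hQ
  set R : Finset V → ℝ := fun e => ∑ v ∈ e, (deg E v : ℝ)
  have hR : ∀ e : E, ∑ f, ((inc E)ᵀ * inc E) e f = R e := sum_transpose_inc_mul_inc_apply E
  have hinf : E.inf' hE R ≤ ρ :=
    le_eigenvalue_of_le_rowSum hC hy hρ fun e => hR e ▸ inf'_le R e.2
  have hsup : ρ ≤ E.sup' hE R :=
    eigenvalue_le_of_rowSum_le hC hy hρ fun e => hR e ▸ le_sup' R e.2
  have hinf_reg (h : E.inf' hE R = ρ) : ∃ c : ℕ, ∀ e ∈ E, ∑ v ∈ e, deg E v = c :=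
    exists_sum_deg_eq_of_forall_eq hE fun e he => hR ⟨e, he⟩ ▸
      rowSum_eq_of_eigenvalue_le_rowSum hC hy hρ hirr (fun f => h ▸ hR f ▸ inf'_le R f.2) _
  have hsup_reg (h : ρ = E.sup' hE R) : ∃ c : ℕ, ∀ e ∈ E, ∑ v ∈ e, deg E v = c :=
    exists_sum_deg_eq_of_forall_eq hE fun e he => hR ⟨e, he⟩ ▸
      rowSum_eq_of_rowSum_le_eigenvalue hC hy hρ hirr (fun f => h ▸ hR f ▸ le_sup' R f.2) _
  have hflat : (∃ c : ℕ, ∀ e ∈ E, ∑ v ∈ e, deg E v = c) → E.sup' hE R ≤ E.inf' hE R :=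
    fun ⟨c, hc⟩ =>
      have hRc : ∀ e ∈ E, R e = c := fun e he => by simp only [R]; exact_mod_cast hc e he
      (sup'_le _ _ fun e he => (hRc e he).le).trans (le_inf' _ _ fun e he => (hRc e he).ge)
  exact ⟨⟨hinf, hsup⟩, ⟨hinf_reg, fun h => le_antisymm hinf (hsup.trans (hflat h))⟩,
    ⟨hsup_reg, fun h => le_antisymm hsup ((hflat h).trans hinf)⟩⟩
end
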